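/- arXiv:1301.2955 — 2 statements merged into one kernel-verified Lean document; each statement's English description precedes it below -/
import Mathlib

section
/- Let a, b, c be integers ≥ 2 with 1/a + 1/b + 1/c < 1, let T = T_{a,b,c} be the triangle group with generators x, y, and let ρ : T → GL(V) be a representation of T on a finite-dimensional complex vector space V. Let i denote the dimension of the space V^T of T-invariants of ρ, let i* denote the dimension of the space of invariants of the dual representation of ρ on V*, and for t ∈ T let V^t denote the fixed-point space of ρ(t) in V. Then the first group cohomology satisfies dim H^1(T, ρ) = dim V + i + i* − (dim V^x + dim V^y + dim V^{xy}). -/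
/-- The relations of the (a,b,c) triangle group: `x^a`, `y^b`, `(x*y)^c`
in the free group on two generators. -/
def triangleRels (a b c : ℕ) : Set (FreeGroup (Fin 2)) :=
  {(FreeGroup.of 0) ^ a, (FreeGroup.of 1) ^ b, (FreeGroup.of 0 * FreeGroup.of 1) ^ c}

/-- The triangle group `T_{a,b,c} = ⟨x, y ∣ x^a = y^b = (xy)^c = 1⟩`. -/
abbrev TriangleGroup (a b c : ℕ) : Type :=
  PresentedGroup (triangleRels a b c)

/-- The generator `x` of the triangle group. -/
def TriangleGroup.x (a b c : ℕ) : TriangleGroup a b c := PresentedGroup.of 0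

/-- The generator `y` of the triangle group. -/
def TriangleGroup.y (a b c : ℕ) : TriangleGroup a b c := PresentedGroup.of 1

/-!
A 1-cocycle `f` of `T_{a,b,c}` is determined by `v = f x` and `w = f y`, and since
`f (g ^ m) = (1 + ρ g + ⋯ + ρ g ^ (m - 1)) (f g)`, the relations force the three norm conditions
`N_x v = 0`, `N_y w = 0`, `N_{xy} (v + ρ x w) = 0`. Conversely any such pair defines a cocycle,
because `g ↦ (f g, g)` is then a well-defined homomorphism into `V ⋊ T`. As the orders of `x`,
`y`, `xy` are invertible in `ℂ`, the kernel of each norm `N_g` is the image of `ρ g - 1`, so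

  `Z¹ ≅ {(v, w) ∈ R_x × R_y | v + ρ x w ∈ R_{xy}}`,   `R_g := range (ρ g - 1)`.

The map `(v, w) ↦ v + ρ x w` sends `R_x × R_y` onto `R_x + R_y`, which contains `R_{xy}` and
whose annihilator in `V*` is `(V*)^T`. Hence
`dim Z¹ = dim R_x + dim R_y + dim R_{xy} - dim V + i*`, while `dim B¹ = dim V - i`.
-/

universe u

open Module LinearMap Submodule Finset groupCohomology Multiplicative

theorem LinearMap.finrank_comap_add_finrank_range {k V W : Type*} [Field k] [AddCommGroup V]
    [Module k V] [AddCommGroup W] [Module k W] [FiniteDimensional k V] {f : V →ₗ[k] W}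
    {D : Submodule k W} (hD : D ≤ range f) :
    finrank k (D.comap f) + finrank k (range f) = finrank k V + finrank k D := by
  let g : D.comap f →ₗ[k] D := f.restrict fun _ hv => hv
  have hg : range g = ⊤ := by
    rw [range_restrict, map_comap_eq, inf_eq_right.mpr hD, comap_subtype_self]
  have hker : finrank k (ker g) = finrank k (ker f) := by
    rw [ker_restrict]
    exact (comapSubtypeEquivOfLe fun v (hv : f v = 0) => by simp [hv]).finrank_eq
  have hg' := g.finrank_range_add_finrank_ker
  rw [hg, finrank_top, hker] at hg'
  have hf := f.finrank_range_add_finrank_ker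
  omega

namespace Module.End

theorem range_sub_one_le_ker_geomSum {k V : Type*} [Ring k] [AddCommGroup V] [Module k V]
    {φ : Module.End k V} {m : ℕ} (hφ : φ ^ m = 1) :
    range (φ - 1) ≤ ker (∑ j ∈ range m, φ ^ j) := by
  rintro _ ⟨v, rfl⟩
  rw [mem_ker, ← Module.End.mul_apply, geom_sum_mul, hφ, sub_self, LinearMap.zero_apply]

theorem ker_geomSum_eq_range_sub_one {k V : Type*} [Field k] [AddCommGroup V] [Module k V]
    [FiniteDimensional k V] {φ : Module.End k V} {m : ℕ} (hφ : φ ^ m = 1)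
    (hm : (m : k) ≠ 0) :
    ker (∑ j ∈ range m, φ ^ j) = range (φ - 1) := by
  have hdisj : Disjoint (ker (∑ j ∈ range m, φ ^ j)) (ker (φ - 1)) := by
    rw [disjoint_iff_inf_le]
    rintro v ⟨hN, hfix⟩
    have hfix : φ v = v := sub_eq_zero.mp hfix
    have hpow (j : ℕ) : (φ ^ j) v = v := by
      rw [Module.End.pow_apply, Function.iterate_fixed hfix]
    have : (m : k) • v = 0 := by
      simpa [hpow, Nat.cast_smul_eq_nsmul] using hN
    exact (smul_eq_zero.mp this).resolve_left hm
  refine (eq_of_le_of_finrank_le (range_sub_one_le_ker_geomSum hφ) ?_).symm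
  have := finrank_add_finrank_le_of_disjoint hdisj
  have := (φ - 1).finrank_range_add_finrank_ker
  omega

end Module.End

namespace Representation

section CommRing

variable {k G V : Type*} [CommRing k] [Group G] [AddCommGroup V] [Module k V]
  (ρ : Representation k G V)

theorem mem_invariants_iff_of_closure_eq_top {S : Set G} (hS : Subgroup.closure S = ⊤) {v : V} :
    v ∈ ρ.invariants ↔ ∀ g ∈ S, ρ g v = v := by
  refine ⟨fun hv g _ => hv g, fun hv g => ?_⟩
  have hg : g ∈ Subgroup.closure S := hS ▸ Subgroup.mem_top g
  induction hg using Subgroup.closure_induction with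
  | mem g hg => exact hv g hg
  | one => simp
  | mul g h _ _ hg hh => rw [map_mul, Module.End.mul_apply, hh, hg]
  | inv g _ hg => rw [inv_apply_eq_iff, hg]

theorem mem_dualAnnihilator_range_sub_one_iff (g : G) (F : Module.Dual k V) :
    F ∈ (range (ρ g - 1)).dualAnnihilator ↔ ρ.dual g F = F := by
  rw [← ker_dualMap_eq_dualAnnihilator_range, mem_ker, eq_comm (a := ρ.dual g F),
    ← inv_apply_eq_iff, dual_apply, inv_inv, LinearMap.ext_iff, LinearMap.ext_iff]
  simp [sub_eq_zero, Dual.transpose_apply]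

theorem dualAnnihilator_sup_range_sub_one {x y : G} (hxy : Subgroup.closure {x, y} = ⊤) :
    (range (ρ x - 1) ⊔ range (ρ y - 1)).dualAnnihilator = ρ.dual.invariants := by
  ext F
  rw [dualAnnihilator_sup_eq, Submodule.mem_inf, mem_dualAnnihilator_range_sub_one_iff,
    mem_dualAnnihilator_range_sub_one_iff, mem_invariants_iff_of_closure_eq_top _ hxy]
  simp

theorem range_sub_one_sup_map_range_sub_one (x y : G) :
    range (ρ x - 1) ⊔ (range (ρ y - 1)).map (ρ x) = range (ρ x - 1) ⊔ range (ρ y - 1) := by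
  have key (w : V) : ρ x w = w + (ρ x - 1) w := by simp
  apply le_antisymm
  · refine sup_le le_sup_left ?_
    rintro _ ⟨_, ⟨w, rfl⟩, rfl⟩
    rw [key]
    exact add_mem (mem_sup_right ⟨w, rfl⟩) (mem_sup_left ⟨_, rfl⟩)
  · refine sup_le le_sup_left ?_
    rintro _ ⟨w, rfl⟩
    have : (ρ y - 1) w = ρ x ((ρ y - 1) w) - (ρ x - 1) ((ρ y - 1) w) := by rw [key]; abel
    rw [this]
    exact sub_mem (mem_sup_right (mem_map_of_mem ⟨w, rfl⟩)) (mem_sup_left ⟨_, rfl⟩)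

/-- `ρ` acting on `Multiplicative V`, so that `V ⋊ G` is a `SemidirectProduct`. -/
def toMulAut : G →* MulAut (Multiplicative V) where
  toFun g := AddEquiv.toMultiplicative
    { toFun := ρ g, invFun := ρ g⁻¹, left_inv := ρ.inv_self_apply g,
      right_inv := ρ.self_inv_apply g, map_add' := map_add (ρ g) }
  map_one' := by ext; simp
  map_mul' g h := by ext; simp

theorem mk_pow_toMulAut (v : V) (g : G) (m : ℕ) :
    (⟨ofAdd v, g⟩ : Multiplicative V ⋊[ρ.toMulAut] G) ^ m =
      ⟨ofAdd ((∑ j ∈ range m, ρ g ^ j) v), g ^ m⟩ := by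
  induction m with
  | zero => rw [pow_zero, pow_zero, sum_range_zero]; rfl
  | succ m ih =>
    rw [pow_succ, ih, pow_succ, sum_range_succ, LinearMap.add_apply, ofAdd_add, ← map_pow]
    rfl

theorem mk_pow_toMulAut_eq_one {v : V} {g : G} {m : ℕ} (hg : g ^ m = 1)
    (hv : (∑ j ∈ range m, ρ g ^ j) v = 0) :
    (⟨ofAdd v, g⟩ : Multiplicative V ⋊[ρ.toMulAut] G) ^ m = 1 := by
  rw [mk_pow_toMulAut, hv, hg]
  rfl

end CommRing

theorem finrank_sup_range_sub_one_add_finrank_dual_invariants {k G V : Type*} [Field k] [Group G]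
    [AddCommGroup V] [Module k V] [FiniteDimensional k V] (ρ : Representation k G V) {x y : G}
    (hxy : Subgroup.closure {x, y} = ⊤) :
    finrank k ↥(range (ρ x - 1) ⊔ range (ρ y - 1)) + finrank k ρ.dual.invariants =
      finrank k V := by
  rw [← dualAnnihilator_sup_range_sub_one ρ hxy]
  exact Subspace.finrank_add_finrank_dualAnnihilator_eq _

end Representation

namespace groupCohomology

section CommRing

variable {k G : Type u} [CommRing k] [Group G] {A : Rep k G}

theorem cocycles₁_map_mul (f : cocycles₁ A) (g h : G) : f (g * h) = A.ρ g (f h) + f g :=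
  (mem_cocycles₁_iff f).1 f.2 g h

theorem cocycles₁_apply_pow (f : cocycles₁ A) (g : G) (m : ℕ) :
    f (g ^ m) = (∑ j ∈ range m, A.ρ g ^ j) (f g) := by
  induction m with
  | zero => simp
  | succ m ih =>
    rw [pow_succ', cocycles₁_map_mul, ih, sum_range_succ', LinearMap.add_apply, pow_zero,
      Module.End.one_apply, LinearMap.sum_apply, map_sum, LinearMap.sum_apply]
    simp only [pow_succ', Module.End.mul_apply]

theorem cocycles₁_ext_of_closure_eq_top {S : Set G} (hS : Subgroup.closure S = ⊤)
    {f₁ f₂ : cocycles₁ A} (h : ∀ g ∈ S, f₁ g = f₂ g) : f₁ = f₂ := by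
  ext g
  have hg : g ∈ Subgroup.closure S := hS ▸ Subgroup.mem_top g
  induction hg using Subgroup.closure_induction with
  | mem g hg => exact h g hg
  | one => simp
  | mul g h _ _ hg hh => rw [cocycles₁_map_mul, cocycles₁_map_mul, hg, hh]
  | inv g _ hg =>
    apply (A.ρ.apply_bijective g).injective
    rw [cocycles₁_map_inv, cocycles₁_map_inv, hg]

theorem toAdd_left_mem_cocycles₁ {V : Type*} [AddCommGroup V] [Module k V]
    {ρ : Representation k G V} (π : G →* Multiplicative V ⋊[ρ.toMulAut] G)
    (hπ : SemidirectProduct.rightHom.comp π = MonoidHom.id G) :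
    (fun g => toAdd (π g).left) ∈ cocycles₁ (Rep.of ρ) := by
  have hright (g : G) : (π g).right = g := DFunLike.congr_fun hπ g
  rw [mem_cocycles₁_iff]
  intro g h
  rw [map_mul, SemidirectProduct.mul_left, hright, toAdd_mul, add_comm]
  rfl

end CommRing

section Field

variable {k G : Type u} [Field k] [Group G] (A : Rep k G)

theorem cocycles₁_apply_mem_range_sub_one [FiniteDimensional k A] (f : cocycles₁ A) {g : G}
    {m : ℕ} (hg : g ^ m = 1) (hm : (m : k) ≠ 0) : f g ∈ range (A.ρ g - 1) := by
  rw [← Module.End.ker_geomSum_eq_range_sub_one (by rw [← map_pow, hg, map_one]) hm, mem_ker,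
    ← cocycles₁_apply_pow, hg, cocycles₁_map_one]

theorem finrank_H1_add_finrank [FiniteDimensional k A] [FiniteDimensional k (cocycles₁ A)] :
    finrank k (H1 A) + finrank k A = finrank k (cocycles₁ A) + finrank k A.ρ.invariants := by
  have hπ : range (H1π A).hom = ⊤ :=
    range_eq_top.mpr ((ModuleCat.epi_iff_surjective _).mp inferInstance)
  have hker : ker (H1π A).hom = (coboundaries₁ A).comap (cocycles₁ A).subtype := by
    ext f; exact H1π_eq_zero_iff f
  have hB : finrank k (coboundaries₁ A) + finrank k A.ρ.invariants = finrank k A := by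
    rw [← d₀₁_ker_eq_invariants]
    exact (d₀₁ A).hom.finrank_range_add_finrank_ker
  have hZ : finrank k (H1 A) + finrank k (coboundaries₁ A) = finrank k (cocycles₁ A) := by
    rw [← finrank_top k (H1 A), ← hπ,
      ← (comapSubtypeEquivOfLe (coboundaries₁_le_cocycles₁ A)).finrank_eq, ← hker]
    exact (H1π A).hom.finrank_range_add_finrank_ker
  omega

end Field

end groupCohomology

namespace TriangleGroup

section Relations

variable (a b c : ℕ)

theorem x_pow : x a b c ^ a = 1 := by
  rw [x, PresentedGroup.of, ← map_pow]
  exact PresentedGroup.one_of_mem (by simp [triangleRels])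

theorem y_pow : y a b c ^ b = 1 := by
  rw [y, PresentedGroup.of, ← map_pow]
  exact PresentedGroup.one_of_mem (by simp [triangleRels])

theorem xy_pow : (x a b c * y a b c) ^ c = 1 := by
  rw [x, y, PresentedGroup.of, PresentedGroup.of, ← map_mul, ← map_pow]
  exact PresentedGroup.one_of_mem (by simp [triangleRels])

theorem closure_x_y : Subgroup.closure {x a b c, y a b c} = ⊤ := by
  rw [← PresentedGroup.closure_range_of]
  congr
  ext g
  simp [Fin.exists_fin_two, x, y, eq_comm]

end Relations

variable {a b c : ℕ} {k V : Type} [AddCommGroup V]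

section CommRing

variable [CommRing k] [Module k V] (ρ : Representation k (TriangleGroup a b c) V)

theorem exists_cocycles₁ {v w : V} (hv : (∑ j ∈ range a, ρ (x a b c) ^ j) v = 0)
    (hw : (∑ j ∈ range b, ρ (y a b c) ^ j) w = 0)
    (hvw : (∑ j ∈ range c, ρ (x a b c * y a b c) ^ j) (v + ρ (x a b c) w) = 0) :
    ∃ f : cocycles₁ (Rep.of ρ), f (x a b c) = v ∧ f (y a b c) = w := by
  let F : Fin 2 → Multiplicative V ⋊[ρ.toMulAut] TriangleGroup a b c :=
    ![⟨ofAdd v, x a b c⟩, ⟨ofAdd w, y a b c⟩]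
  have hrel : ∀ r ∈ triangleRels a b c, FreeGroup.lift F r = 1 := by
    rintro r (rfl | rfl | rfl)
    · rw [map_pow, FreeGroup.lift_apply_of]
      exact ρ.mk_pow_toMulAut_eq_one (x_pow a b c) hv
    · rw [map_pow, FreeGroup.lift_apply_of]
      exact ρ.mk_pow_toMulAut_eq_one (y_pow a b c) hw
    · rw [map_pow, map_mul, FreeGroup.lift_apply_of, FreeGroup.lift_apply_of]
      exact ρ.mk_pow_toMulAut_eq_one (xy_pow a b c) hvw
  let π := PresentedGroup.toGroup hrel
  have hπ : SemidirectProduct.rightHom.comp π = MonoidHom.id _ :=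
    PresentedGroup.ext fun i => by
      fin_cases i <;> simp only [MonoidHom.comp_apply, π, PresentedGroup.toGroup.of] <;> rfl
  refine ⟨⟨_, toAdd_left_mem_cocycles₁ π hπ⟩, ?_, ?_⟩
  · change toAdd (π (PresentedGroup.of 0)).left = v
    rw [PresentedGroup.toGroup.of]
    rfl
  · change toAdd (π (PresentedGroup.of 1)).left = w
    rw [PresentedGroup.toGroup.of]
    rfl

/-- The value `f x + ρ x (f y)` at `x * y` of a cocycle `f`. -/
def valueAtMul : range (ρ (x a b c) - 1) × range (ρ (y a b c) - 1) →ₗ[k] V :=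
  (LinearMap.range _).subtype.coprod (ρ (x a b c) ∘ₗ (LinearMap.range _).subtype)

theorem range_valueAtMul :
    range (valueAtMul ρ) = range (ρ (x a b c) - 1) ⊔ range (ρ (y a b c) - 1) := by
  rw [valueAtMul, range_coprod, range_subtype, range_comp, range_subtype,
    ρ.range_sub_one_sup_map_range_sub_one]

theorem range_sub_one_mul_le_range_valueAtMul :
    range (ρ (x a b c * y a b c) - 1) ≤ range (valueAtMul ρ) := by
  rintro _ ⟨w, rfl⟩
  refine ⟨(⟨(ρ (x a b c) - 1) w, w, rfl⟩, ⟨(ρ (y a b c) - 1) w, w, rfl⟩), ?_⟩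
  simp [valueAtMul]

end CommRing

section Field

variable [Field k] [Module k V] [FiniteDimensional k V]
  (ρ : Representation k (TriangleGroup a b c) V)

def evalXY (ha : (a : k) ≠ 0) (hb : (b : k) ≠ 0) :
    cocycles₁ (Rep.of ρ) →ₗ[k] range (ρ (x a b c) - 1) × range (ρ (y a b c) - 1) where
  toFun f := (⟨f (x a b c), cocycles₁_apply_mem_range_sub_one _ f (x_pow a b c) ha⟩,
    ⟨f (y a b c), cocycles₁_apply_mem_range_sub_one _ f (y_pow a b c) hb⟩)
  map_add' _ _ := rfl
  map_smul' _ _ := rfl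

variable {ρ}

theorem injective_evalXY (ha : (a : k) ≠ 0) (hb : (b : k) ≠ 0) :
    Function.Injective (evalXY ρ ha hb) := fun _ _ h =>
  cocycles₁_ext_of_closure_eq_top (closure_x_y a b c) <| by
    rintro g (rfl | rfl)
    exacts [congrArg (fun p => (p.1 : V)) h, congrArg (fun p => (p.2 : V)) h]

theorem range_evalXY (ha : (a : k) ≠ 0) (hb : (b : k) ≠ 0) (hc : (c : k) ≠ 0) :
    range (evalXY ρ ha hb) = (range (ρ (x a b c * y a b c) - 1)).comap (valueAtMul ρ) := by
  apply le_antisymm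
  · rintro _ ⟨f, rfl⟩
    rw [mem_comap]
    have := cocycles₁_apply_mem_range_sub_one _ f (xy_pow a b c) hc
    rwa [cocycles₁_map_mul, add_comm] at this
  · rintro ⟨⟨v, hv⟩, ⟨w, hw⟩⟩ hvw
    have hrel {g : TriangleGroup a b c} {m : ℕ} (hg : g ^ m = 1) {u : V}
        (hu : u ∈ LinearMap.range (ρ g - 1)) : (∑ j ∈ range m, ρ g ^ j) u = 0 :=
      Module.End.range_sub_one_le_ker_geomSum (by rw [← map_pow, hg, map_one]) hu
    obtain ⟨f, hfx, hfy⟩ := exists_cocycles₁ ρ (hrel (x_pow a b c) hv)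
      (hrel (y_pow a b c) hw) (hrel (xy_pow a b c) hvw)
    exact ⟨f, Prod.ext (Subtype.ext hfx) (Subtype.ext hfy)⟩

theorem finrank_cocycles₁_add_finrank_sup (ha : (a : k) ≠ 0) (hb : (b : k) ≠ 0)
    (hc : (c : k) ≠ 0) :
    finrank k (cocycles₁ (Rep.of ρ)) +
        finrank k ↥(range (ρ (x a b c) - 1) ⊔ range (ρ (y a b c) - 1)) =
      finrank k (range (ρ (x a b c) - 1)) + finrank k (range (ρ (y a b c) - 1)) +
        finrank k (range (ρ (x a b c * y a b c) - 1)) := by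
  have := finrank_comap_add_finrank_range (range_sub_one_mul_le_range_valueAtMul ρ)
  rw [← range_evalXY ha hb hc, finrank_range_of_inj (injective_evalXY ha hb), range_valueAtMul,
    finrank_prod] at this
  exact this

end Field

end TriangleGroup

open Module groupCohomology in
theorem dim_H1_triangleGroup_general (a b c : ℕ) (ha : 2 ≤ a) (hb : 2 ≤ b) (hc : 2 ≤ c)
    (V : Type) [AddCommGroup V] [Module ℂ V] [FiniteDimensional ℂ V]
    (ρ : Representation ℂ (TriangleGroup a b c) V) :
    (finrank ℂ (H1 (Rep.of ρ)) : ℤ) =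
      finrank ℂ V + finrank ℂ ρ.invariants + finrank ℂ ρ.dual.invariants -
        (finrank ℂ (LinearMap.ker (ρ (TriangleGroup.x a b c) - 1)) +
         finrank ℂ (LinearMap.ker (ρ (TriangleGroup.y a b c) - 1)) +
         finrank ℂ (LinearMap.ker (ρ (TriangleGroup.x a b c * TriangleGroup.y a b c) - 1))) := by
  have hne {m : ℕ} (hm : 2 ≤ m) : (m : ℂ) ≠ 0 := Nat.cast_ne_zero.mpr (by omega)
  have := Module.Finite.of_injective _ (TriangleGroup.injective_evalXY (ρ := ρ) (hne ha) (hne hb))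
  have hZ := TriangleGroup.finrank_cocycles₁_add_finrank_sup (ρ := ρ) (hne ha) (hne hb) (hne hc)
  have hH : finrank ℂ (H1 (Rep.of ρ)) + finrank ℂ V =
      finrank ℂ (cocycles₁ (Rep.of ρ)) + finrank ℂ ρ.invariants :=
    finrank_H1_add_finrank (Rep.of ρ)
  have hU :=
    ρ.finrank_sup_range_sub_one_add_finrank_dual_invariants (TriangleGroup.closure_x_y a b c)
  have hx := (ρ (TriangleGroup.x a b c) - 1).finrank_range_add_finrank_ker
  have hy := (ρ (TriangleGroup.y a b c) - 1).finrank_range_add_finrank_ker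
  have hxy :=
    (ρ (TriangleGroup.x a b c * TriangleGroup.y a b c) - 1).finrank_range_add_finrank_ker
  omega

open Module groupCohomology in
/-- Weil's formula for the dimension of the first group cohomology of a representation of a
hyperbolic triangle group on a finite-dimensional complex vector space. -/
theorem dim_H1_triangleGroup (a b c : ℕ) (ha : 2 ≤ a) (hb : 2 ≤ b) (hc : 2 ≤ c)
    (hhyp : (1 : ℚ) / a + 1 / b + 1 / c < 1)
    (V : Type) [AddCommGroup V] [Module ℂ V] [FiniteDimensional ℂ V]
    (ρ : Representation ℂ (TriangleGroup a b c) V) :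
    (finrank ℂ (H1 (Rep.of ρ)) : ℤ) =
      finrank ℂ V + finrank ℂ ρ.invariants + finrank ℂ ρ.dual.invariants -
        (finrank ℂ (LinearMap.ker (ρ (TriangleGroup.x a b c) - 1)) +
         finrank ℂ (LinearMap.ker (ρ (TriangleGroup.y a b c) - 1)) +
         finrank ℂ (LinearMap.ker (ρ (TriangleGroup.x a b c * TriangleGroup.y a b c) - 1))) :=
  dim_H1_triangleGroup_general a b c ha hb hc V ρ
end

section
/- Let Ω be a finite set of size n and let H be a group of permutations of Ω generated by h₁, h₂, h₃ with h₁h₂h₃ equal to the identity permutation. For 1 ≤ i ≤ 3 let m_i be the number of cycles of h_i on Ω (counting fixed points as cycles of length 1, so m_i is the number of orbits of ⟨h_i⟩ on Ω). If H acts transitively on Ω, then m₁ + m₂ + m₃ ≤ n + 2, and moreover m₁ + m₂ + m₃ ≡ n (mod 2). -/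
/-!
Write each `hᵢ` as a product of `n - mᵢ` transpositions. Multiplying a permutation by a
transposition changes its number of cycles by exactly one, and adding a transposition to a set of
generators merges at most two orbits; hence `k` transpositions whose product has `c` cycles and
which generate a group with `o` orbits satisfy `n + c ≤ k + 2 o` (Ree's argument). For the
concatenated factorisations of `h₁, h₂, h₃` the product is `1`, so `c = n`, `o = 1` and
`k = 3n - (m₁ + m₂ + m₃)`, which is the bound. The parity is that of the sign of `h₁h₂h₃ = 1`.
-/

/-- The number of cycles of a permutation `h` of a finite set `Ω`, counting fixed points as
cycles of length `1`: the number of orbits of the cyclic group `⟨h⟩` on `Ω`. -/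
noncomputable def cycleCount {Ω : Type} [Fintype Ω] (h : Equiv.Perm Ω) : ℕ :=
  Nat.card (MulAction.orbitRel.Quotient (Subgroup.zpowers h) Ω)


open Equiv Equiv.Perm MulAction Subgroup

namespace Setoid

variable {α : Type*}

def joinPair (r : Setoid α) (a b : α) : Setoid α where
  r x y := r x y ∨ (r x a ∧ r b y) ∨ (r x b ∧ r a y)
  iseqv := by
    refine ⟨fun x ↦ .inl (r.refl x), ?_, ?_⟩
    · rintro x y (h | ⟨h₁, h₂⟩ | ⟨h₁, h₂⟩)
      · exact .inl (r.symm h)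
      · exact .inr (.inr ⟨r.symm h₂, r.symm h₁⟩)
      · exact .inr (.inl ⟨r.symm h₂, r.symm h₁⟩)
    · rintro x y z (h | ⟨h₁, h₂⟩ | ⟨h₁, h₂⟩) (h' | ⟨h₁', h₂'⟩ | ⟨h₁', h₂'⟩)
      · exact .inl (r.trans h h')
      · exact .inr (.inl ⟨r.trans h h₁', h₂'⟩)
      · exact .inr (.inr ⟨r.trans h h₁', h₂'⟩)
      · exact .inr (.inl ⟨h₁, r.trans h₂ h'⟩)
      · exact .inl (r.trans h₁ (r.trans (r.symm (r.trans h₂ h₁')) h₂'))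
      · exact .inl (r.trans h₁ h₂')
      · exact .inr (.inr ⟨h₁, r.trans h₂ h'⟩)
      · exact .inl (r.trans h₁ h₂')
      · exact .inl (r.trans h₁ (r.trans (r.symm (r.trans h₂ h₁')) h₂'))

theorem le_joinPair (r : Setoid α) (a b : α) : r ≤ r.joinPair a b := fun _ _ h ↦ .inl h

theorem joinPair_eq_self {r : Setoid α} {a b : α} (hab : r a b) : r.joinPair a b = r := by
  refine le_antisymm (fun {x y} h ↦ ?_) (r.le_joinPair a b)
  rcases h with h | ⟨h₁, h₂⟩ | ⟨h₁, h₂⟩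
  · exact h
  · exact r.trans h₁ (r.trans hab h₂)
  · exact r.trans h₁ (r.trans (r.symm hab) h₂)

theorem card_quotient_le_of_le [Finite α] {r s : Setoid α} (h : r ≤ s) :
    Nat.card (Quotient s) ≤ Nat.card (Quotient r) :=
  Nat.card_le_card_of_surjective (map_of_le h) (Quotient.ind fun x ↦ ⟨Quotient.mk r x, rfl⟩)

/-- Off the class of `b`, the quotient map `α ⧸ r → α ⧸ s` is a bijection. -/
theorem card_quotient_add_one [Finite α] {r s : Setoid α} {a b : α} (hrs : r ≤ s)
    (hsr : s ≤ r.joinPair a b) (hab : ¬ r a b) (hs : s a b) :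
    Nat.card (Quotient s) + 1 = Nat.card (Quotient r) := by
  set B := Quotient.mk r b
  let φ : {q : Quotient r // q ≠ B} → Quotient s := fun q ↦ map_of_le hrs q.1
  have hφ : Function.Bijective φ := by
    constructor
    · rintro ⟨q₁, hq₁⟩ ⟨q₂, hq₂⟩ h
      induction q₁ using Quotient.ind with | _ x =>
      induction q₂ using Quotient.ind with | _ y =>
      rcases hsr (Quotient.exact h) with h' | ⟨-, h'⟩ | ⟨h', -⟩
      · exact Subtype.ext (Quotient.sound h')
      · exact absurd (Quotient.sound (r.symm h')) hq₂
      · exact absurd (Quotient.sound h') hq₁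
    · refine Quotient.ind fun z ↦ ?_
      by_cases hz : Quotient.mk r z = B
      · exact ⟨⟨Quotient.mk r a, fun h ↦ hab (Quotient.exact h)⟩,
          Quotient.sound (s.trans hs (s.symm (hrs (Quotient.exact hz))))⟩
      · exact ⟨⟨_, hz⟩, rfl⟩
  rw [← Nat.card_eq_of_bijective φ hφ, ← Finite.card_option]
  classical exact Nat.card_congr (Equiv.optionSubtypeNe B)

end Setoid

section OrbitRel

variable {α : Type*}

theorem orbitRel_closure_le {S : Set (Perm α)} {R : Setoid α} (hS : ∀ s ∈ S, ∀ x, R (s x) x) :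
    orbitRel (closure S) α ≤ R := by
  have key : ∀ g ∈ closure S, ∀ x, R (g x) x := by
    intro g hg
    induction hg using closure_induction with
    | mem s hs => exact hS s hs
    | one => exact R.refl
    | mul g h _ _ ihg ihh => exact fun x ↦ R.trans (ihg (h x)) (ihh x)
    | inv g _ ih => exact fun x ↦ by simpa using R.symm (ih (g⁻¹ x))
  rintro x y ⟨⟨g, hg⟩, rfl⟩
  exact key g hg y

theorem orbitRel_zpowers (g : Perm α) : orbitRel (zpowers g) α = SameCycle.setoid g := by
  ext x y
  refine ⟨?_, fun h ↦ ?_⟩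
  · rintro ⟨⟨_, i, rfl⟩, h⟩
    exact SameCycle.symm ⟨i, h⟩
  · obtain ⟨i, h⟩ := SameCycle.symm h
    exact ⟨⟨g ^ i, i, rfl⟩, h⟩

theorem sameCycle_setoid_le {g : Perm α} {R : Setoid α} (hg : ∀ x, R (g x) x) :
    SameCycle.setoid g ≤ R := by
  rw [← orbitRel_zpowers, zpowers_eq_closure]
  exact orbitRel_closure_le (by simpa using hg)

end OrbitRel

namespace Equiv.Perm

variable {α : Type*} {g : Perm α}

theorem not_sameCycle_of_pow_apply_eq_self [Finite α] {x y : α} {k : ℕ} (hxy : x ≠ y) (hk : 0 < k)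
    (hx : (g ^ k) x = x) (hy : ∀ j, 0 < j → j < k → (g ^ j) x ≠ y) : ¬ g.SameCycle x y := by
  intro h
  obtain ⟨i, rfl⟩ := h.exists_nat_pow_eq
  have hper : Function.IsPeriodicPt g k x := by
    rwa [Function.IsPeriodicPt, Function.IsFixedPt, ← coe_pow]
  have hmod : (g ^ (i % k)) x = (g ^ i) x := by rw [coe_pow, coe_pow, hper.iterate_mod_apply]
  rcases (i % k).eq_zero_or_pos with h0 | hpos
  · exact hxy (by rwa [h0, pow_zero, one_apply] at hmod)
  · exact hy (i % k) hpos (Nat.mod_lt i hk) hmod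

variable [DecidableEq α] {a b : α}

theorem mul_swap_pow_apply_left {k : ℕ} (hk : 0 < k)
    (h : ∀ j, 0 < j → j < k → (g ^ j) b ≠ a ∧ (g ^ j) b ≠ b) :
    ((g * swap a b) ^ k) a = (g ^ k) b := by
  induction k, hk using Nat.le_induction with
  | base => simp
  | succ k hk ih =>
    obtain ⟨hka, hkb⟩ := h k hk (by omega)
    rw [pow_succ', mul_apply, ih fun j hj hjk ↦ h j hj (by omega), mul_apply,
      swap_apply_of_ne_of_ne hka hkb, ← mul_apply, ← pow_succ']

/-- Follow the `g`-orbit of `b` until it first returns to `{a, b}`: if it meets `a` first, then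
`a ↦ g b ↦ … ↦ a` is a whole cycle of `g * swap a b` avoiding `b`; if it returns to `b` first,
then `g * swap a b` carries `a` along that orbit to `b`. -/
theorem sameCycle_mul_swap_iff [Finite α] (hab : a ≠ b) :
    (g * swap a b).SameCycle a b ↔ ¬ g.SameCycle a b := by
  classical
  have hP : ∃ k, 0 < k ∧ ((g ^ k) b = a ∨ (g ^ k) b = b) :=
    ⟨orderOf g, orderOf_pos g, .inr (by rw [pow_orderOf_eq_one, one_apply])⟩
  obtain ⟨hk, hkab⟩ := Nat.find_spec hP
  have hmin : ∀ j, 0 < j → j < Nat.find hP → (g ^ j) b ≠ a ∧ (g ^ j) b ≠ b :=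
    fun j hj hjk ↦ not_or.1 fun h ↦ Nat.find_min hP hjk ⟨hj, h⟩
  have hiter := mul_swap_pow_apply_left hk hmin
  rcases hkab with hka | hkb
  · have hba : g.SameCycle b a := ⟨Nat.find hP, by rw [zpow_natCast, hka]⟩
    refine iff_of_false ?_ (not_not.2 hba.symm)
    refine not_sameCycle_of_pow_apply_eq_self hab hk (hiter.trans hka) fun j hj hjk ↦ ?_
    rw [mul_swap_pow_apply_left hj fun i hi hij ↦ hmin i hi (hij.trans hjk)]
    exact (hmin j hj hjk).2
  · refine iff_of_true ⟨Nat.find hP, by rw [zpow_natCast, hiter, hkb]⟩ fun h ↦ ?_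
    exact not_sameCycle_of_pow_apply_eq_self hab.symm hk hkb (fun j hj hjk ↦ (hmin j hj hjk).1)
      h.symm

theorem sameCycle_setoid_mul_swap_le (g : Perm α) (a b : α) :
    SameCycle.setoid (g * swap a b) ≤ (SameCycle.setoid g).joinPair a b := by
  have hstep (x : α) : g.SameCycle (g x) x := sameCycle_apply_left.2 (SameCycle.refl g x)
  refine sameCycle_setoid_le fun x ↦ ?_
  rcases eq_or_ne x a with rfl | hxa
  · rw [mul_apply, swap_apply_left]
    exact .inr (.inr ⟨hstep b, SameCycle.refl g x⟩)
  rcases eq_or_ne x b with rfl | hxb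
  · rw [mul_apply, swap_apply_right]
    exact .inr (.inl ⟨hstep a, SameCycle.refl g x⟩)
  · rw [mul_apply, swap_apply_of_ne_of_ne hxa hxb]
    exact .inl (hstep x)

end Equiv.Perm

section CycleCount

variable {Ω : Type} [Fintype Ω]

theorem cycleCount_eq_card_quotient (g : Perm Ω) :
    cycleCount g = Nat.card (Quotient (SameCycle.setoid g)) := by
  rw [cycleCount, orbitRel.Quotient, orbitRel_zpowers]

variable [DecidableEq Ω] {g : Perm Ω} {a b : Ω}

theorem cycleCount_mul_swap_add_one (hab : a ≠ b) (h : ¬ g.SameCycle a b) :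
    cycleCount (g * swap a b) + 1 = cycleCount g := by
  have h' := (sameCycle_mul_swap_iff hab).2 h
  have hle := sameCycle_setoid_mul_swap_le (g * swap a b) a b
  rw [mul_swap_mul_self, Setoid.joinPair_eq_self h'] at hle
  rw [cycleCount_eq_card_quotient, cycleCount_eq_card_quotient]
  exact Setoid.card_quotient_add_one hle (sameCycle_setoid_mul_swap_le g a b) h h'

theorem cycleCount_mul_swap (hab : a ≠ b) (h : g.SameCycle a b) :
    cycleCount (g * swap a b) = cycleCount g + 1 := by
  have := cycleCount_mul_swap_add_one hab fun h' ↦ (sameCycle_mul_swap_iff hab).1 h' h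
  rwa [mul_swap_mul_self, eq_comm] at this

theorem cycleCount_mul_swap_le (g : Perm Ω) (a b : Ω) :
    cycleCount (g * swap a b) ≤ cycleCount g + 1 := by
  rcases eq_or_ne a b with rfl | hab
  · rw [swap_self, ← Perm.one_def, mul_one]
    omega
  by_cases h : g.SameCycle a b
  · exact (cycleCount_mul_swap hab h).le
  · have := cycleCount_mul_swap_add_one hab h
    omega

end CycleCount

section OrbitCount

variable {α : Type*}

noncomputable def orbitCount (G : Subgroup (Perm α)) : ℕ :=
  Nat.card (orbitRel.Quotient G α)

theorem orbitRel_mono {G H : Subgroup (Perm α)} (h : G ≤ H) : orbitRel G α ≤ orbitRel H α := by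
  rintro x y ⟨⟨g, hg⟩, rfl⟩
  exact ⟨⟨g, h hg⟩, rfl⟩

theorem orbitCount_anti [Finite α] {G H : Subgroup (Perm α)} (h : G ≤ H) :
    orbitCount H ≤ orbitCount G :=
  Setoid.card_quotient_le_of_le (orbitRel_mono h)

theorem orbitCount_bot : orbitCount (⊥ : Subgroup (Perm α)) = Nat.card α := by
  have : orbitRel (⊥ : Subgroup (Perm α)) α = ⊥ := by
    ext x y
    simp [orbitRel_apply, mem_orbit_iff, eq_comm]
  rw [orbitCount, orbitRel.Quotient, this]
  exact Nat.card_congr Setoid.quotientBotEquiv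

theorem orbitCount_le_one [Finite α] {G : Subgroup (Perm α)} (h : ∀ x y : α, ∃ g ∈ G, g x = y) :
    orbitCount G ≤ 1 := by
  have : IsPretransitive G α := ⟨fun x y ↦ let ⟨g, hg, hgx⟩ := h x y; ⟨⟨g, hg⟩, hgx⟩⟩
  have := (pretransitive_iff_subsingleton_quotient G α).1 this
  exact Finite.card_le_one_iff_subsingleton.2 this

variable [DecidableEq α]

theorem orbitRel_closure_insert_swap_le (S : Set (Perm α)) (a b : α) :
    orbitRel (closure (insert (swap a b) S)) α ≤ (orbitRel (closure S) α).joinPair a b := by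
  set r := orbitRel (closure S) α
  refine orbitRel_closure_le ?_
  rintro s (rfl | hs) x
  · rcases eq_or_ne x a with rfl | hxa
    · rw [swap_apply_left]
      exact .inr (.inr ⟨r.refl b, r.refl x⟩)
    rcases eq_or_ne x b with rfl | hxb
    · rw [swap_apply_right]
      exact .inr (.inl ⟨r.refl a, r.refl x⟩)
    · rw [swap_apply_of_ne_of_ne hxa hxb]
  · exact r.le_joinPair a b ⟨⟨s, subset_closure hs⟩, rfl⟩

variable {S : Set (Perm α)} {a b : α}

theorem orbitCount_closure_insert_swap (h : orbitRel (closure S) α a b) :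
    orbitCount (closure (insert (swap a b) S)) = orbitCount (closure S) := by
  have hle := orbitRel_closure_insert_swap_le S a b
  rw [Setoid.joinPair_eq_self h] at hle
  rw [orbitCount, orbitCount, orbitRel.Quotient, orbitRel.Quotient,
    le_antisymm hle (orbitRel_mono (closure_mono (Set.subset_insert _ _)))]

theorem orbitCount_closure_insert_swap_add_one [Finite α] (h : ¬ orbitRel (closure S) α a b) :
    orbitCount (closure (insert (swap a b) S)) + 1 = orbitCount (closure S) :=
  Setoid.card_quotient_add_one (orbitRel_mono (closure_mono (Set.subset_insert _ _)))
    (orbitRel_closure_insert_swap_le S a b) h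
    ⟨⟨swap a b, subset_closure (Set.mem_insert _ _)⟩, swap_apply_right a b⟩

end OrbitCount

section Transpositions

variable {Ω : Type} [Fintype Ω]

theorem cycleCount_one : cycleCount (1 : Perm Ω) = Fintype.card Ω := by
  rw [← Nat.card_eq_fintype_card, ← orbitCount_bot, ← zpowers_one_eq_bot]
  rfl

theorem cycleCount_le_card (g : Perm Ω) : cycleCount g ≤ Fintype.card Ω := by
  rw [← Nat.card_eq_fintype_card, ← orbitCount_bot]
  exact orbitCount_anti bot_le

variable [DecidableEq Ω]

/-- Appending `swap a b`: if `a` and `b` lie in different orbits of the group generated so far,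
they lie in different cycles of the product, and both counts drop by one; otherwise the orbit
count is unchanged and the cycle count grows by at most one. -/
theorem card_add_cycleCount_prod_le (l : List (Perm Ω)) (hl : ∀ τ ∈ l, τ.IsSwap) :
    Fintype.card Ω + cycleCount l.prod ≤ l.length + 2 * orbitCount (closure {τ | τ ∈ l}) := by
  induction l using List.reverseRecOn with
  | nil =>
    simp only [List.prod_nil, cycleCount_one, List.length_nil, List.not_mem_nil, Set.ofPred_false,
      Subgroup.closure_empty, orbitCount_bot, Nat.card_eq_fintype_card]
    omega
  | append_singleton l τ ih =>
    obtain ⟨a, b, hab, rfl⟩ := hl τ (by simp)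
    have ih := ih fun σ hσ ↦ hl σ (by simp [hσ])
    have hset : {σ | σ ∈ l ++ [swap a b]} = insert (swap a b) {σ | σ ∈ l} := by
      ext
      simp [or_comm]
    rw [hset, List.prod_append, List.prod_singleton, List.length_append, List.length_singleton]
    by_cases horb : orbitRel (closure {σ | σ ∈ l}) Ω a b
    · have := cycleCount_mul_swap_le l.prod a b
      rw [orbitCount_closure_insert_swap horb]
      omega
    · have hprod : ¬ l.prod.SameCycle a b := fun h ↦ by
        obtain ⟨i, hi⟩ := h.symm
        exact horb ⟨⟨l.prod ^ i, zpow_mem (list_prod_mem fun σ hσ ↦ subset_closure hσ) i⟩, hi⟩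
      have := cycleCount_mul_swap_add_one hab hprod
      have := orbitCount_closure_insert_swap_add_one horb
      omega

theorem exists_isSwap_list_prod_eq (g : Perm Ω) :
    ∃ l : List (Perm Ω), (∀ τ ∈ l, τ.IsSwap) ∧ l.prod = g ∧
      l.length + cycleCount g = Fintype.card Ω := by
  induction hm : Fintype.card Ω - cycleCount g using Nat.strong_induction_on generalizing g with
  | _ m ih =>
  by_cases hg : g = 1
  · subst hg
    exact ⟨[], by simp, rfl, by simp [cycleCount_one]⟩
  obtain ⟨a, ha⟩ : ∃ a, g a ≠ a := not_forall.1 fun h ↦ hg (Equiv.ext h)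
  have hsplit := cycleCount_mul_swap (Ne.symm ha) (⟨1, by simp⟩ : g.SameCycle a (g a))
  have hle := cycleCount_le_card (g * swap a (g a))
  obtain ⟨l, hl, hprod, hlen⟩ := ih _ (by omega) (g * swap a (g a)) rfl
  refine ⟨l ++ [swap a (g a)], fun τ hτ ↦ ?_, by simp [hprod], ?_⟩
  · rcases List.mem_append.1 hτ with hτ | hτ
    · exact hl τ hτ
    · rw [List.mem_singleton.1 hτ]
      exact ⟨a, g a, Ne.symm ha, rfl⟩
  · rw [List.length_append, List.length_singleton]
    omega

end Transpositions

/-- If a transitive group of permutations of a set of size `n` is generated by `h₁, h₂, h₃` with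
`h₁h₂h₃ = 1`, and `h_i` has `m_i` cycles, then `m₁ + m₂ + m₃ ≤ n + 2` and
`m₁ + m₂ + m₃ ≡ n (mod 2)`. -/
theorem cycleCount_bound_of_transitive (Ω : Type) [Fintype Ω] (n : ℕ) (hn : Fintype.card Ω = n)
    (h₁ h₂ h₃ : Equiv.Perm Ω) (hprod : h₁ * h₂ * h₃ = 1)
    (htrans : ∀ ω ω' : Ω, ∃ g ∈ Subgroup.closure ({h₁, h₂, h₃} : Set (Equiv.Perm Ω)), g ω = ω') :
    cycleCount h₁ + cycleCount h₂ + cycleCount h₃ ≤ n + 2 ∧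
    (cycleCount h₁ + cycleCount h₂ + cycleCount h₃) % 2 = n % 2 := by
  classical
  obtain ⟨l₁, hs₁, rfl, hlen₁⟩ := exists_isSwap_list_prod_eq h₁
  obtain ⟨l₂, hs₂, rfl, hlen₂⟩ := exists_isSwap_list_prod_eq h₂
  obtain ⟨l₃, hs₃, rfl, hlen₃⟩ := exists_isSwap_list_prod_eq h₃
  set L := l₁ ++ l₂ ++ l₃
  have hL : ∀ τ ∈ L, τ.IsSwap := by
    simp only [L, List.mem_append]
    rintro τ ((h | h) | h)
    exacts [hs₁ τ h, hs₂ τ h, hs₃ τ h]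
  have hLprod : L.prod = 1 := by rw [List.prod_append, List.prod_append, hprod]
  have hclosure : closure {l₁.prod, l₂.prod, l₃.prod} ≤ closure {τ | τ ∈ L} := by
    have hmem (l) (hl : l ⊆ L) : l.prod ∈ closure {τ | τ ∈ L} :=
      list_prod_mem fun τ hτ ↦ subset_closure (hl hτ)
    rw [closure_le]
    rintro _ (rfl | rfl | rfl) <;> exact hmem _ (by simp [L])
  have horb : orbitCount (closure {τ | τ ∈ L}) ≤ 1 :=
    (orbitCount_anti hclosure).trans (orbitCount_le_one htrans)
  have hbound := card_add_cycleCount_prod_le L hL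
  rw [hLprod, cycleCount_one] at hbound
  have heven : Even L.length := by
    rw [← neg_one_pow_eq_one_iff_even (by decide : (-1 : ℤˣ) ≠ 1), ← sign_prod_list_swap hL, hLprod,
      Perm.sign_one]
  have hlen : L.length = l₁.length + l₂.length + l₃.length := by simp [L, add_assoc]
  rw [Nat.even_iff] at heven
  omega
end
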